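/- arXiv:2302.11903 — 3 statements merged into one kernel-verified Lean document; each statement's English description precedes it below -/
import Mathlib

section
/- For all integers n ≥ 1, k ≥ 1, and 1 ≤ m ≤ n, the identity sum_{j=1}^{n-m} (-1)^{j+1} binom(n, m+j) * binom(n+k-j-2, n-1) = binom(m+k-2, m) * binom(n+k-2, n-m-1) holds. -/
/-- Binomial coefficient with integer arguments, following the convention that
`zchoose a b = 0` whenever `b < 0` or `b > a`. -/
def zchoose (a b : ℤ) : ℤ :=
  if 0 ≤ b ∧ b ≤ a then ((a.toNat).choose b.toNat : ℤ) else 0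

lemma zchoose_neg {a b : ℤ} (h : b < 0) : zchoose a b = 0 := by
  rw [zchoose, if_neg]; omega

lemma zchoose_of_lt {a b : ℤ} (h : a < b) : zchoose a b = 0 := by
  rw [zchoose, if_neg]; omega

lemma zchoose_nat (A B : ℕ) : zchoose A B = (A.choose B : ℤ) := by
  by_cases h : B ≤ A
  · rw [zchoose, if_pos (by constructor <;> omega)]; simp
  · rw [zchoose, if_neg (by omega), Nat.choose_eq_zero_of_lt (by omega)]; simp

lemma zchoose_zero {a : ℤ} (h : 0 ≤ a) : zchoose a 0 = 1 := by
  rw [zchoose, if_pos ⟨le_refl 0, h⟩]; simp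

lemma zabsorb1 (a b : ℤ) : (b + 1) * zchoose a (b + 1) = (a - b) * zchoose a b := by
  rcases lt_or_ge b 0 with hb | hb
  · rcases lt_or_ge (b+1) 0 with hb1 | hb1
    · rw [zchoose_neg hb1, zchoose_neg hb]; ring
    · have : b = -1 := by omega
      subst this
      rw [zchoose_neg hb]; ring
  · rcases lt_or_ge a (b+1) with ha | ha
    · rw [zchoose_of_lt ha]
      rcases lt_or_ge a b with ha2 | ha2
      · rw [zchoose_of_lt ha2]; ring
      · have : a = b := by omega
        subst this; ring
    · lift a to ℕ using (by omega)
      lift b to ℕ using hb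
      have hba : b + 1 ≤ a := by exact_mod_cast ha
      rw [show ((b:ℤ)+1) = ((b+1 : ℕ) : ℤ) by push_cast; ring, zchoose_nat, zchoose_nat]
      have h := Nat.choose_succ_right_eq a b
      have h2 : (a.choose (b+1) * (b+1) : ℤ) = (a.choose b : ℤ) * ((a:ℤ) - b) := by
        rw [show ((a:ℤ) - b) = ((a - b : ℕ) : ℤ) by omega]
        exact_mod_cast h
      push_cast at h2 ⊢
      linarith

lemma zabsorb2 (a b : ℤ) : (a + 1 - b) * zchoose (a + 1) b = (a + 1) * zchoose a b := by
  rcases lt_or_ge b 0 with hb | hb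
  · rw [zchoose_neg hb, zchoose_neg hb]; ring
  · rcases lt_or_ge (a+1) b with ha | ha
    · rw [zchoose_of_lt (show a + 1 < b by omega), zchoose_of_lt (show a < b by omega)]; ring
    · rcases lt_or_ge a b with ha2 | ha2
      · have hb1 : b = a + 1 := by omega
        rw [hb1, zchoose_of_lt (show a < a + 1 by omega)]; ring
      · lift b to ℕ using hb
        lift a to ℕ using (by omega)
        have hba : b ≤ a := by exact_mod_cast ha2
        rw [show ((a:ℤ)+1) = ((a+1 : ℕ) : ℤ) by push_cast; ring, zchoose_nat, zchoose_nat]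
        have h := Nat.choose_mul_succ_eq a b
        have h2 : ((a.choose b : ℤ)) * ((a:ℤ) + 1) = ((a+1).choose b : ℤ) * ((a:ℤ) + 1 - b) := by
          rw [show ((a:ℤ) + 1 - b) = ((a + 1 - b : ℕ) : ℤ) by omega]
          exact_mod_cast h
        push_cast at h2 ⊢
        linarith

lemma zpascal (a b : ℤ) (hb : 0 ≤ b) :
    zchoose (a + 1) (b + 1) = zchoose a b + zchoose a (b + 1) := by
  rcases lt_or_ge a b with ha | ha
  · rw [zchoose_of_lt ha, zchoose_of_lt (show a < b + 1 by omega),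
        zchoose_of_lt (show a + 1 < b + 1 by omega)]; ring
  · lift b to ℕ using hb
    lift a to ℕ using (by omega)
    rw [show ((a:ℤ)+1) = ((a+1 : ℕ) : ℤ) by push_cast; ring,
        show ((b:ℤ)+1) = ((b+1 : ℕ) : ℤ) by push_cast; ring,
        zchoose_nat, zchoose_nat, zchoose_nat]
    exact_mod_cast Nat.choose_succ_succ (a) (b)

lemma zdelta (r : ℤ) : ∀ (N : ℕ) (x : ℤ), (N : ℤ) ≤ x →
    ∑ i ∈ Finset.range (N+1), (-1:ℤ)^i * (N.choose i : ℤ) * zchoose (x - i) r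
      = zchoose (x - N) (r - N) := by
  intro N
  induction N with
  | zero => intro x hx; simp
  | succ N IH =>
    intro x hx
    have hx' : (N:ℤ) ≤ x := by push_cast at hx ⊢; omega
    have hx1 : (N:ℤ) ≤ x - 1 := by push_cast at hx ⊢; omega
    have IH1 := IH x hx'
    have IH2 := IH (x-1) hx1
    have key : ∑ i ∈ Finset.range (N+1+1), (-1:ℤ)^i * ((N+1).choose i : ℤ) * zchoose (x - i) r
        = (∑ i ∈ Finset.range (N+1), (-1:ℤ)^i * (N.choose i : ℤ) * zchoose (x - i) r)
          - (∑ i ∈ Finset.range (N+1), (-1:ℤ)^i * (N.choose i : ℤ) * zchoose ((x-1) - i) r) := by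
      rw [Finset.sum_range_succ' (fun i => (-1:ℤ)^i * ((N+1).choose i : ℤ) * zchoose (x - i) r) (N+1)]
      have hterm : ∀ i ∈ Finset.range (N+1),
          (-1:ℤ)^(i+1) * ((N+1).choose (i+1) : ℤ) * zchoose (x - (i+1 : ℕ)) r
          = ((-1:ℤ)^(i+1) * ((N).choose (i+1) : ℤ) * zchoose (x - (i+1 : ℕ)) r)
            - ((-1:ℤ)^i * ((N).choose i : ℤ) * zchoose ((x-1) - i) r) := by
        intro i _
        rw [Nat.choose_succ_succ]
        rw [show (x - ((i+1 : ℕ) : ℤ)) = (x - 1) - i by push_cast; ring]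
        push_cast
        ring
      rw [Finset.sum_congr rfl hterm, Finset.sum_sub_distrib]
      have h2 : (∑ i ∈ Finset.range (N+1), (-1:ℤ)^(i+1) * ((N).choose (i+1) : ℤ) * zchoose (x - (i+1 : ℕ)) r)
          + (-1:ℤ)^0 * ((N).choose 0 : ℤ) * zchoose (x - (0:ℕ)) r
          = ∑ i ∈ Finset.range (N+1), (-1:ℤ)^i * ((N).choose i : ℤ) * zchoose (x - i) r := by
        rw [← Finset.sum_range_succ' (fun i => (-1:ℤ)^i * ((N).choose i : ℤ) * zchoose (x - i) r) (N+1)]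
        rw [Finset.sum_range_succ]
        simp [Nat.choose_succ_self]
      simp only [Nat.choose_zero_right, Nat.cast_one, pow_zero, one_mul, Nat.cast_zero,
        sub_zero, Nat.cast_ofNat, Nat.cast_add] at h2 ⊢
      linarith
    rw [key, IH1, IH2]
    rcases lt_or_ge (r - N) 0 with hr | hr
    · rw [zchoose_neg hr, zchoose_neg (show r - ((N+1:ℕ):ℤ) < 0 by push_cast; omega),
          zchoose_neg (show r - ((N:ℕ):ℤ) < 0 by omega)]
      ring
    · rcases eq_or_lt_of_le hr with hr0 | hrpos
      · rw [show r - ((N:ℕ):ℤ) = 0 by omega]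
        rw [zchoose_zero (show (0:ℤ) ≤ x - N by omega),
            zchoose_zero (show (0:ℤ) ≤ x - 1 - N by push_cast at hx; omega),
            zchoose_neg (show r - ((N+1:ℕ):ℤ) < 0 by push_cast; omega)]
        ring
      · have hp := zpascal (x - ((N+1:ℕ):ℤ)) (r - ((N+1:ℕ):ℤ)) (by push_cast; omega)
        rw [show x - ((N+1:ℕ):ℤ) + 1 = x - N by push_cast; ring,
            show r - ((N+1:ℕ):ℤ) + 1 = r - N by push_cast; ring] at hp
        rw [show x - 1 - ((N:ℕ):ℤ) = x - ((N+1:ℕ):ℤ) by push_cast; ring]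
        linarith

def gcert (n K m : ℕ) (l : ℕ) : ℤ :=
  (-1:ℤ)^(l+1) * l * ((K:ℤ) + l) * zchoose n ((m:ℤ) + 1 - l) * zchoose ((n:ℤ) + K - 1 + l) ((n:ℤ) - 1)

lemma wz (n K m l : ℕ) :
    ((m:ℤ)+1) * ((K:ℤ)+m+1) * ((-1:ℤ)^l * zchoose n ((m:ℤ)+1 - l) * zchoose ((n:ℤ)+K-1+l) ((n:ℤ)-1))
    - ((m:ℤ)+K) * ((n:ℤ)-m-1) * ((-1:ℤ)^l * zchoose n ((m:ℤ) - l) * zchoose ((n:ℤ)+K-1+l) ((n:ℤ)-1))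
    = gcert n K m (l+1) - gcert n K m l := by
  unfold gcert
  have h1 := zabsorb2 ((n:ℤ)+K-1+l) ((n:ℤ)-1)
  have h2 := zabsorb1 (n:ℤ) ((m:ℤ)-l)
  push_cast
  rw [show (m:ℤ) + 1 - ((l:ℤ) + 1) = (m:ℤ) - l by ring,
      show (n:ℤ) + (K:ℤ) - 1 + ((l:ℤ) + 1) = (n:ℤ) + K + l by ring]
  rw [show (n:ℤ) + (K:ℤ) - 1 + (l:ℤ) + 1 = (n:ℤ) + K + l by ring] at h1
  rw [show (m:ℤ) - (l:ℤ) + 1 = (m:ℤ) + 1 - l by ring] at h2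
  linear_combination ((-1:ℤ)^l) * (((K:ℤ)+m+l+1) * zchoose ((n:ℤ)+K-1+l) ((n:ℤ)-1) * h2
    - ((l:ℤ)+1) * zchoose (n:ℤ) ((m:ℤ) - l) * h1)

lemma recS (n K m : ℕ) :
    ((m:ℤ)+1) * ((K:ℤ)+m+1) *
      (∑ l ∈ Finset.range (m+2), (-1:ℤ)^l * zchoose n ((m:ℤ)+1 - l) * zchoose ((n:ℤ)+K-1+l) ((n:ℤ)-1))
    = ((m:ℤ)+K) * ((n:ℤ)-m-1) *
      (∑ l ∈ Finset.range (m+1), (-1:ℤ)^l * zchoose n ((m:ℤ) - l) * zchoose ((n:ℤ)+K-1+l) ((n:ℤ)-1)) := by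
  have tele := Finset.sum_range_sub (gcert n K m) (m+2)
  have g0 : gcert n K m 0 = 0 := by simp [gcert]
  have gtop : gcert n K m (m+2) = 0 := by
    unfold gcert
    rw [show (m:ℤ) + 1 - ((m+2:ℕ):ℤ) = -1 by push_cast; ring, zchoose_neg (by norm_num)]
    ring
  have hsum : ∑ l ∈ Finset.range (m+2),
      (((m:ℤ)+1) * ((K:ℤ)+m+1) * ((-1:ℤ)^l * zchoose n ((m:ℤ)+1 - l) * zchoose ((n:ℤ)+K-1+l) ((n:ℤ)-1))
      - ((m:ℤ)+K) * ((n:ℤ)-m-1) * ((-1:ℤ)^l * zchoose n ((m:ℤ) - l) * zchoose ((n:ℤ)+K-1+l) ((n:ℤ)-1)))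
      = 0 := by
    rw [Finset.sum_congr rfl (fun l _ => wz n K m l), tele, g0, gtop]; ring
  rw [Finset.sum_sub_distrib, ← Finset.mul_sum, ← Finset.mul_sum] at hsum
  have hlast : ∑ l ∈ Finset.range (m+2), (-1:ℤ)^l * zchoose n ((m:ℤ) - l) * zchoose ((n:ℤ)+K-1+l) ((n:ℤ)-1)
      = ∑ l ∈ Finset.range (m+1), (-1:ℤ)^l * zchoose n ((m:ℤ) - l) * zchoose ((n:ℤ)+K-1+l) ((n:ℤ)-1) := by
    rw [Finset.sum_range_succ, zchoose_neg (show (m:ℤ) - ((m+1:ℕ):ℤ) < 0 by push_cast; omega)]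
    ring
  rw [hlast] at hsum
  linarith

lemma recR (n K m : ℕ) (hK : 1 ≤ K) :
    ((m:ℤ)+1) * ((K:ℤ)+m+1) *
      (zchoose ((m:ℤ)+K) ((m:ℤ)+1) * zchoose ((n:ℤ)+K-1) ((n:ℤ)-m-2))
    = ((m:ℤ)+K) * ((n:ℤ)-m-1) *
      (zchoose ((m:ℤ)+K-1) m * zchoose ((n:ℤ)+K-1) ((n:ℤ)-m-1)) := by
  have e1 := zabsorb1 ((m:ℤ)+K) (m:ℤ)
  have e2 := zabsorb2 ((m:ℤ)+K-1) (m:ℤ)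
  have e3 := zabsorb1 ((n:ℤ)+K-1) ((n:ℤ)-m-2)
  rw [show (m:ℤ)+K-1+1 = (m:ℤ)+K by ring] at e2
  rw [show (n:ℤ)-m-2+1 = (n:ℤ)-m-1 by ring] at e3
  have hK0 : ((K:ℤ)) ≠ 0 := by exact_mod_cast Nat.one_le_iff_ne_zero.mp hK
  apply mul_left_cancel₀ hK0
  linear_combination ((K:ℤ)+m+1) * zchoose ((n:ℤ)+K-1) ((n:ℤ)-m-2) * ((K:ℤ) * e1 + (K:ℤ) * e2)
    - (K:ℤ) * ((m:ℤ)+K) * zchoose ((m:ℤ)+K-1) (m:ℤ) * e3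

lemma A_ident (n K : ℕ) (hn : 1 ≤ n) (hK : 1 ≤ K) (m : ℕ) :
    ∑ l ∈ Finset.range (m+1), (-1:ℤ)^l * zchoose n ((m:ℤ) - l) * zchoose ((n:ℤ)+K-1+l) ((n:ℤ)-1)
    = zchoose ((m:ℤ)+K-1) m * zchoose ((n:ℤ)+K-1) ((n:ℤ)-m-1) := by
  induction m with
  | zero =>
    simp only [zero_add, Finset.sum_range_one, Nat.cast_zero, pow_zero, one_mul, add_zero,
      sub_zero]
    rw [zchoose_zero (show (0:ℤ) ≤ (n:ℤ) by positivity),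
        zchoose_zero (show (0:ℤ) ≤ (K:ℤ)-1 by omega)]
    try ring
  | succ m IH =>
    have h1 := recS n K m
    have h2 := recR n K m hK
    have hne : ((m:ℤ)+1) * ((K:ℤ)+m+1) ≠ 0 := by positivity
    apply mul_left_cancel₀ hne
    push_cast
    rw [show (m:ℤ)+1+K-1 = (m:ℤ)+K by ring,
        show (n:ℤ)-((m:ℤ)+1)-1 = (n:ℤ)-m-2 by ring]
    push_cast at h1 IH
    rw [h1, IH]
    linarith [h2]

lemma neg_one_pow_sub (a b : ℕ) (h : b ≤ a) : (-1:ℤ)^(a-b) = (-1)^a * (-1)^b := by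
  have h2 : (-1:ℤ)^(a-b) * (-1)^b = (-1)^a := by
    rw [← pow_add]; congr 1; omega
  have h3 : ((-1:ℤ))^b * (-1)^b = 1 := by
    rw [← pow_add]; exact Even.neg_one_pow ⟨b, rfl⟩
  calc (-1:ℤ)^(a-b) = (-1)^(a-b) * ((-1)^b * (-1)^b) := by rw [h3, mul_one]
    _ = ((-1)^(a-b) * (-1)^b) * (-1)^b := by ring
    _ = (-1)^a * (-1)^b := by rw [h2]

/-- For all integers `n ≥ 1`, `k ≥ 1` and `1 ≤ m ≤ n`, one has
`∑_{j=1}^{n-m} (-1)^{j+1} C(n, m+j) C(n+k-j-2, n-1) = C(m+k-2, m) C(n+k-2, n-m-1)`. -/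
theorem statement_1 (n k m : ℕ) (hn : 1 ≤ n) (hk : 1 ≤ k) (hm : 1 ≤ m) (hmn : m ≤ n) :
    ∑ j ∈ Finset.Icc 1 (n - m),
        (-1 : ℤ) ^ (j + 1) * zchoose n (m + j) * zchoose ((n : ℤ) + k - j - 2) ((n : ℤ) - 1)
      = zchoose ((m : ℤ) + k - 2) m * zchoose ((n : ℤ) + k - 2) ((n : ℤ) - m - 1) := by
  rcases eq_or_lt_of_le hk with hk1 | hk2
  · -- k = 1 : everything vanishes
    have hRHS : zchoose ((m:ℤ) + k - 2) m = 0 :=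
      zchoose_of_lt (show (m:ℤ) + k - 2 < m by omega)
    rw [hRHS, zero_mul]
    apply Finset.sum_eq_zero
    intro j hj
    simp only [Finset.mem_Icc] at hj
    rw [zchoose_of_lt (show (n:ℤ) + k - j - 2 < (n:ℤ) - 1 by omega)]
    ring
  · -- k ≥ 2
    set K := k - 1 with hKdef
    have hK1 : 1 ≤ K := by omega
    have hfull := zdelta ((n:ℤ)-1) n ((n:ℤ)+m+k-2) (by omega)
    rw [zchoose_neg (show (n:ℤ)-1-(n:ℤ) < 0 by omega)] at hfull
    rw [Finset.range_eq_Ico,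
        ← Finset.sum_Ico_consecutive _ (Nat.zero_le (m+1)) (show m+1 ≤ n+1 by omega)] at hfull
    have hb1 : ∑ i ∈ Finset.Ico 0 (m+1), (-1:ℤ)^i * (n.choose i : ℤ) * zchoose ((n:ℤ)+m+k-2 - i) ((n:ℤ)-1)
        = (-1:ℤ)^m * ∑ l ∈ Finset.range (m+1),
            (-1:ℤ)^l * zchoose n ((m:ℤ) - l) * zchoose ((n:ℤ)+K-1+l) ((n:ℤ)-1) := by
      have hrefl := Finset.sum_range_reflect
        (fun l => (-1:ℤ)^l * zchoose n ((m:ℤ) - l) * zchoose ((n:ℤ)+K-1+l) ((n:ℤ)-1)) (m+1)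
      rw [← hrefl, ← Finset.range_eq_Ico, Finset.mul_sum]
      apply Finset.sum_congr rfl
      intro j hj
      simp only [Finset.mem_range] at hj
      have hjm : j ≤ m := by omega
      rw [show m+1-1-j = m-j by omega]
      rw [show ((m-j:ℕ):ℤ) = (m:ℤ) - j by omega]
      rw [show (m:ℤ) - ((m:ℤ) - j) = (j:ℤ) by ring]
      rw [show (n:ℤ)+(K:ℤ)-1+((m:ℤ)-j) = (n:ℤ)+m+k-2-j by
        rw [show ((K:ℕ):ℤ) = (k:ℤ)-1 by omega]; ring]
      rw [zchoose_nat]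
      rw [neg_one_pow_sub m j hjm]
      have hsq : (-1:ℤ)^m * (-1)^m = 1 := by
        rw [← pow_add]; exact Even.neg_one_pow ⟨m, rfl⟩
      linear_combination (-1:ℤ) * (-1:ℤ)^j * (n.choose j : ℤ) * zchoose ((n:ℤ)+m+k-2-j) ((n:ℤ)-1) * hsq
    have hb2 : ∑ i ∈ Finset.Ico (m+1) (n+1), (-1:ℤ)^i * (n.choose i : ℤ) * zchoose ((n:ℤ)+m+k-2 - i) ((n:ℤ)-1)
        = (-1:ℤ)^(m+1) * ∑ j ∈ Finset.Icc 1 (n - m),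
            (-1 : ℤ) ^ (j + 1) * zchoose n (m + j) * zchoose ((n : ℤ) + k - j - 2) ((n : ℤ) - 1) := by
      rw [← Finset.Ico_add_one_right_eq_Icc, Finset.sum_Ico_eq_sum_range, Finset.sum_Ico_eq_sum_range]
      rw [show n+1-(m+1) = n-m by omega, show n-m+1-1 = n-m by omega]
      rw [Finset.mul_sum]
      apply Finset.sum_congr rfl
      intro t _
      rw [show ((m:ℤ)+((1+t:ℕ):ℤ)) = ((m+1+t : ℕ):ℤ) by push_cast; ring]
      rw [zchoose_nat]
      rw [show (n:ℤ)+(k:ℤ)-((1+t:ℕ):ℤ)-2 = (n:ℤ)+m+k-2-((m+1+t:ℕ):ℤ) by push_cast; ring]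
      push_cast
      ring
    rw [hb1, hb2] at hfull
    have hA := A_ident n K hn hK1 m
    rw [show (m:ℤ)+(K:ℤ)-1 = (m:ℤ)+k-2 by omega] at hA
    rw [show (n:ℤ)+(K:ℤ)-1 = (n:ℤ)+k-2 by omega] at hA hfull
    rw [hA] at hfull
    rcases Nat.even_or_odd m with he | ho
    · rw [he.neg_one_pow, (Even.add_one he).neg_one_pow] at hfull
      linarith
    · rw [ho.neg_one_pow, (Odd.add_one ho).neg_one_pow] at hfull
      linarith
end

section
/- Let K be a field, q = ⟨X_1,...,X_n⟩ ⊆ A = K[X_1,...,X_n], S = A/q^k, and let ε_S : Ω^1_{S/K} → q/q^k be the Euler form given by ε_S(d f) = (deg f)·f for homogeneous f. If char(K) = 0 or char(K) does not divide the positive integer i, then the degree-i part of the Euler–Koszul complex 0 → (Ω^n_{S/K})_i → ... → (Ω^2_{S/K})_i → (Ω^1_{S/K})_i → (q/q^k)_i → 0 is an exact sequence of K-vector spaces. -/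
open MvPolynomial Module

noncomputable section

variable (K : Type) [Field K] (n k : ℕ)

/-- The irrelevant maximal ideal `q = ⟨X_1, ..., X_n⟩` of `A = K[X_1, ..., X_n]`. -/
def irrIdeal : Ideal (MvPolynomial (Fin n) K) :=
  Ideal.span (Set.range (MvPolynomial.X (R := K) (σ := Fin n)))

/-- The ring `S = K[X_1, ..., X_n]/⟨X_1, ..., X_n⟩^k`. -/
def FatRing : Type := MvPolynomial (Fin n) K ⧸ (irrIdeal K n) ^ k

instance : CommRing (FatRing K n k) := Ideal.Quotient.commRing _
instance : Algebra K (FatRing K n k) := Ideal.Quotient.algebra K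

/-- The degree-`e` homogeneous component of the graded ring `S = A/q^k`. -/
def FatRingComp (e : ℕ) : Submodule K (FatRing K n k) :=
  (MvPolynomial.homogeneousSubmodule (Fin n) K e).map
    (Ideal.Quotient.mkₐ K ((irrIdeal K n) ^ k)).toLinearMap

/-- `K`-module structure on exterior powers of the Kähler differential module, by
restriction of scalars along `K → S`. -/
instance (priority := 10) (m : ℕ) : Module K (⋀[FatRing K n k]^m (Ω[FatRing K n k⁄K])) :=
  Module.compHom _ (algebraMap K (FatRing K n k))

/-- The degree-`i` homogeneous component of the graded `S`-module `Ω¹_{S/K}`. -/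
def Omega1Comp (i : ℕ) : Submodule K (Ω[FatRing K n k⁄K]) :=
  Submodule.span K
    {w : Ω[FatRing K n k⁄K] |
      ∃ (e : ℕ) (f : FatRing K n k), f ∈ FatRingComp K n k e ∧
      ∃ (c : ℕ) (g : FatRing K n k), g ∈ FatRingComp K n k c ∧ e + c = i ∧
        w = f • KaehlerDifferential.D K (FatRing K n k) g}

/-- The degree-`i` homogeneous component of the graded `S`-module `Ω^m_{S/K}`. -/
def OmegaComp (m i : ℕ) : Submodule K (⋀[FatRing K n k]^m (Ω[FatRing K n k⁄K])) :=
  Submodule.span K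
    {w : ⋀[FatRing K n k]^m (Ω[FatRing K n k⁄K]) |
      ∃ (e : ℕ) (f : FatRing K n k), f ∈ FatRingComp K n k e ∧
      ∃ (c : Fin m → ℕ) (g : Fin m → FatRing K n k),
        (∀ j, g j ∈ FatRingComp K n k (c j)) ∧ e + (∑ j, c j) = i ∧
        (w : ExteriorAlgebra (FatRing K n k) (Ω[FatRing K n k⁄K]))
          = f • ExteriorAlgebra.ιMulti (FatRing K n k) m
              (fun j => KaehlerDifferential.D K (FatRing K n k) (g j))}

/-! The Koszul differentials are restrictions of the contraction `ε⌋·` on the exterior algebra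
`⋀ Ω_{S/K}`. Together with the exterior derivative `d` it satisfies the homotopy formula
`ε⌋(d w) + d(ε⌋w) = i • w` for `w` of internal degree `i`: on a spanning form
`f • df₁ ∧ ⋯ ∧ dfₘ` both sides are `(deg f + ∑ deg fⱼ) • w`, because `ε(df) = (deg f) f` and
`d(df) = 0`. So if `i` is invertible in `K`, every cycle `w` of degree `i` is the boundary of
`i⁻¹ • d w`, which again has degree `i`.

The exterior derivative of `⋀ Ω_{S/K}` is built from the universal property of the exterior
algebra, as the `θ`-component of an algebra map into `⋀ Ω_{S/K}` adjoined an odd square-zero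
element `θ`. -/

open CliffordAlgebra

namespace ExteriorAlgebra

variable {R M : Type*} [CommRing R] [AddCommGroup M] [Module R M]

theorem ι_mul_eq_involute_mul (v : M) (x : ExteriorAlgebra R M) :
    ι R v * x = involute x * ι R v := by
  induction x using ExteriorAlgebra.induction with
  | algebraMap r => rw [AlgHom.commutes, Algebra.commutes]
  | ι w => rw [involute_ι, neg_mul, eq_neg_iff_add_eq_zero, ι_add_mul_swap]
  | mul a b ha hb => rw [← mul_assoc, ha, mul_assoc, hb, map_mul, mul_assoc]
  | add a b ha hb => rw [mul_add, ha, hb, map_add, add_mul]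

theorem contractLeft_ιMulti (d : Dual R M) :
    ∀ {m : ℕ} (w : Fin (m + 1) → M),
      contractLeft d (ιMulti R (m + 1) w) =
        ∑ j : Fin (m + 1), ((-1 : ℤ) ^ (j : ℕ)) • (d (w j) • ιMulti R m fun t => w (j.succAbove t))
  | 0, w => by simp [contractLeft_ι, Algebra.smul_def]
  | m + 1, w => by
    rw [ιMulti_succ_apply, contractLeft_ι_mul, contractLeft_ιMulti]
    conv_rhs => rw [Fin.sum_univ_succ]
    simp only [Finset.mul_sum, ιMulti_succ_apply, Matrix.vecTail, Function.comp_def,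
      Fin.succAbove_zero, Fin.succ_succAbove_zero, Fin.succ_succAbove_succ, mul_smul_comm,
      Fin.val_zero, Fin.val_succ, pow_zero, one_smul, pow_succ, mul_neg_one, neg_smul,
      Finset.sum_neg_distrib, sub_eq_add_neg]

theorem apply_eq_contractLeft_of_apply_ιMulti {N : Type*} [AddCommGroup N] [Module R N]
    (d : Dual R M) {m : ℕ} (F : ⋀[R]^m M →ₗ[R] N) (j : N →ₗ[R] ExteriorAlgebra R M)
    (h : ∀ w, j (F (exteriorPower.ιMulti R m w)) = contractLeft d (ιMulti R m w))
    (x : ⋀[R]^m M) : j (F x) = contractLeft d x :=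
  LinearMap.congr_fun (exteriorPower.linearMap_ext (f := j ∘ₗ F)
    (g := contractLeft d ∘ₗ (⋀[R]^m M).subtype) (AlternatingMap.ext h)) x

end ExteriorAlgebra

namespace KaehlerDifferential

variable (R S : Type*) [CommRing R] [CommRing S] [Algebra R S]

local notation "Λ" => ExteriorAlgebra S Ω[S⁄R]

/-- `Λ[θ]` for an odd `θ` with `θ² = 0`: the pair `(x, y)` stands for `x + θ y`, and
`x θ = θ x̄` for the grade involution `x ↦ x̄`. -/
def OddDualNumber : Type _ := Λ × Λ

namespace OddDualNumber

instance : AddCommGroup (OddDualNumber R S) := inferInstanceAs (AddCommGroup (Λ × Λ))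

instance : Mul (OddDualNumber R S) :=
  ⟨fun a b => (a.1 * b.1, involute a.1 * b.2 + a.2 * b.1)⟩

instance : One (OddDualNumber R S) := ⟨((1 : Λ), (0 : Λ))⟩

variable {R S}

def mk (x y : Λ) : OddDualNumber R S := (x, y)

@[simp] theorem mk_fst (x y : Λ) : (mk x y : OddDualNumber R S).1 = x := rfl
@[simp] theorem mk_snd (x y : Λ) : (mk x y : OddDualNumber R S).2 = y := rfl

@[ext] theorem ext {a b : OddDualNumber R S} (h₁ : a.1 = b.1) (h₂ : a.2 = b.2) : a = b :=
  Prod.ext h₁ h₂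

@[simp] theorem mul_fst (a b : OddDualNumber R S) : (a * b).1 = a.1 * b.1 := rfl
@[simp] theorem mul_snd (a b : OddDualNumber R S) :
    (a * b).2 = involute a.1 * b.2 + a.2 * b.1 := rfl
@[simp] theorem one_fst : (1 : OddDualNumber R S).1 = 1 := rfl
@[simp] theorem one_snd : (1 : OddDualNumber R S).2 = 0 := rfl
@[simp] theorem add_fst (a b : OddDualNumber R S) : (a + b).1 = a.1 + b.1 := rfl
@[simp] theorem add_snd (a b : OddDualNumber R S) : (a + b).2 = a.2 + b.2 := rfl
@[simp] theorem zero_fst : (0 : OddDualNumber R S).1 = 0 := rfl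
@[simp] theorem zero_snd : (0 : OddDualNumber R S).2 = 0 := rfl

instance : Ring (OddDualNumber R S) :=
  { (inferInstance : AddCommGroup (OddDualNumber R S)) with
    mul_assoc a b c := by ext <;> simp [mul_add, add_mul, mul_assoc]; abel
    one_mul a := by ext <;> simp
    mul_one a := by ext <;> simp
    left_distrib a b c := by ext <;> simp [mul_add]; abel
    right_distrib a b c := by ext <;> simp [add_mul]; abel
    zero_mul a := by ext <;> simp
    mul_zero a := by ext <;> simp }

variable (R S) in
def inclusion : S →+* OddDualNumber R S where
  toFun s := mk (algebraMap S Λ s) (ExteriorAlgebra.ι S (D R S s))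
  map_one' := by ext <;> simp
  map_mul' a b := by
    ext
    · simp
    · simp [Derivation.leibniz, Algebra.smul_def, Algebra.commutes b]
  map_zero' := by ext <;> simp
  map_add' a b := by ext <;> simp

instance : Algebra S (OddDualNumber R S) :=
  (inclusion R S).toAlgebra' fun s x => by
    ext
    · exact Algebra.commutes s x.1
    · simp only [inclusion, RingHom.coe_mk, MonoidHom.coe_mk, OneHom.coe_mk, mul_snd, mk_fst,
        mk_snd, AlgHom.commutes]
      rw [Algebra.commutes, ExteriorAlgebra.ι_mul_eq_involute_mul, add_comm]

@[simp] theorem algebraMap_fst (s : S) :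
    (algebraMap S (OddDualNumber R S) s).1 = algebraMap S Λ s := rfl

@[simp] theorem algebraMap_snd (s : S) :
    (algebraMap S (OddDualNumber R S) s).2 = ExteriorAlgebra.ι S (D R S s) := rfl

@[simp] theorem smul_fst (s : S) (a : OddDualNumber R S) : (s • a).1 = s • a.1 :=
  (Algebra.smul_def s a.1).symm

@[simp] theorem smul_snd (s : S) (a : OddDualNumber R S) :
    (s • a).2 = s • a.2 + ExteriorAlgebra.ι S (D R S s) * a.1 := by
  change involute (algebraMap S Λ s) * a.2 + _ = _
  rw [AlgHom.commutes, Algebra.smul_def]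
  rfl

instance : Module R (OddDualNumber R S) := Module.compHom _ (algebraMap R S)

instance : IsScalarTower R S (OddDualNumber R S) := IsScalarTower.of_algebraMap_smul fun _ _ => rfl

variable (R S) in
/-- A derivation because `ι (D f) * ι (D g)` is alternating; as `S` acts through `inclusion`, its
extension to `Ω` sends `f • D g` to `f ι (D g) + θ ι (D f) ι (D g)`. -/
def derivation : Derivation R S (OddDualNumber R S) :=
  Derivation.mk'
    { toFun g := mk (ExteriorAlgebra.ι S (D R S g)) 0
      map_add' a b := by ext <;> simp
      map_smul' r g := by
        change _ = algebraMap R S r • (mk _ _ : OddDualNumber R S)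
        ext <;> simp only [smul_fst, smul_snd, mk_fst, mk_snd] <;> simp }
    fun a b => by
      ext
      · simp [Derivation.leibniz]
      · simp [ExteriorAlgebra.ι_add_mul_swap]

theorem liftKaehlerDifferential_derivation_fst_and_involute_snd (v : Ω[S⁄R]) :
    ((derivation R S).liftKaehlerDifferential v).1 = ExteriorAlgebra.ι S v ∧
      involute ((derivation R S).liftKaehlerDifferential v).2 =
        ((derivation R S).liftKaehlerDifferential v).2 := by
  have hv : v ∈ Submodule.span S (Set.range (D R S)) := by
    rw [span_range_derivation]; trivial
  induction hv using Submodule.span_induction with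
  | mem _ h =>
    obtain ⟨g, rfl⟩ := h
    simp [derivation]
  | zero => simp
  | add a b _ _ ha hb => simp [ha.1, hb.1, ha.2, hb.2]
  | smul s a _ ha => simp [ha.1, ha.2]

theorem liftKaehlerDifferential_derivation_mul_self (v : Ω[S⁄R]) :
    (derivation R S).liftKaehlerDifferential v * (derivation R S).liftKaehlerDifferential v
      = 0 := by
  obtain ⟨h₁, h₂⟩ := liftKaehlerDifferential_derivation_fst_and_involute_snd v
  ext
  · simp [h₁]
  · rw [mul_snd, h₁, involute_ι, neg_mul, ExteriorAlgebra.ι_mul_eq_involute_mul, h₂,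
      neg_add_cancel, zero_snd]

end OddDualNumber

open OddDualNumber

/-- `x ↦ x + θ d x` for the exterior derivative `d`: multiplicativity is the graded Leibniz
rule. -/
def toOddDualNumber : Λ →ₐ[S] OddDualNumber R S :=
  ExteriorAlgebra.lift S ⟨(derivation R S).liftKaehlerDifferential,
    liftKaehlerDifferential_derivation_mul_self⟩

def exteriorDerivative : Λ →+ Λ where
  toFun x := (toOddDualNumber R S x).2
  map_zero' := by simp
  map_add' a b := by simp

variable {R S}

theorem toOddDualNumber_fst (x : Λ) : (toOddDualNumber R S x).1 = x := by
  induction x using ExteriorAlgebra.induction with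
  | algebraMap s => simp [toOddDualNumber]
  | ι v => simp [toOddDualNumber, liftKaehlerDifferential_derivation_fst_and_involute_snd]
  | mul a b ha hb => simp [ha, hb]
  | add a b ha hb => simp [ha, hb]

theorem exteriorDerivative_mul (x y : Λ) :
    exteriorDerivative R S (x * y) =
      involute x * exteriorDerivative R S y + exteriorDerivative R S x * y := by
  simp [exteriorDerivative, toOddDualNumber_fst]

theorem exteriorDerivative_algebraMap (s : S) :
    exteriorDerivative R S (algebraMap S Λ s) = ExteriorAlgebra.ι S (D R S s) := by
  simp [exteriorDerivative, toOddDualNumber]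

theorem exteriorDerivative_ι_D (g : S) :
    exteriorDerivative R S (ExteriorAlgebra.ι S (D R S g)) = 0 := by
  simp [exteriorDerivative, toOddDualNumber, derivation]

theorem exteriorDerivative_smul (s : S) (x : Λ) :
    exteriorDerivative R S (s • x) =
      s • exteriorDerivative R S x + ExteriorAlgebra.ι S (D R S s) * x := by
  rw [Algebra.smul_def, exteriorDerivative_mul, AlgHom.commutes, exteriorDerivative_algebraMap,
    Algebra.smul_def]

theorem exteriorDerivative_ιMulti_D : ∀ {m : ℕ} (g : Fin m → S),
    exteriorDerivative R S (ExteriorAlgebra.ιMulti S m fun j => D R S (g j)) = 0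
  | 0, g => by simpa using exteriorDerivative_algebraMap (R := R) (1 : S)
  | m + 1, g => by
    rw [ExteriorAlgebra.ιMulti_succ_apply, exteriorDerivative_mul, exteriorDerivative_ι_D,
      zero_mul, add_zero]
    exact mul_eq_zero_of_right _ (exteriorDerivative_ιMulti_D fun j => g j.succ)

theorem exteriorDerivative_algebraMap_smul (r : R) (x : Λ) :
    exteriorDerivative R S (algebraMap R S r • x) =
      algebraMap R S r • exteriorDerivative R S x := by
  rw [exteriorDerivative_smul, Derivation.map_algebraMap, map_zero, zero_mul, add_zero]

theorem exteriorDerivative_smul_ιMulti_D {m : ℕ} (f : S) (g : Fin m → S) :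
    exteriorDerivative R S (f • ExteriorAlgebra.ιMulti S m fun j => D R S (g j)) =
      ExteriorAlgebra.ιMulti S (m + 1) fun j => D R S ((Fin.cons f g : Fin (m + 1) → S) j) := by
  rw [exteriorDerivative_smul, exteriorDerivative_ιMulti_D, smul_zero, zero_add,
    ExteriorAlgebra.ιMulti_succ_apply]
  rfl

variable (ε : Dual S Ω[S⁄R])

theorem exteriorDerivative_contractLeft_ιMulti_D : ∀ {m : ℕ} {g : Fin m → S} {c : Fin m → ℕ},
    (∀ j, ε (D R S (g j)) = c j • g j) →
      exteriorDerivative R S (contractLeft ε (ExteriorAlgebra.ιMulti S m fun j => D R S (g j))) =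
        (∑ j, c j) • ExteriorAlgebra.ιMulti S m fun j => D R S (g j)
  | 0, g, c, _ => by simp [contractLeft_one]
  | m + 1, g, c, hg => by
    have ih := exteriorDerivative_contractLeft_ιMulti_D fun j => hg j.succ
    simp only [ExteriorAlgebra.ιMulti_succ_apply, Matrix.vecTail, Function.comp_def] at ih ⊢
    rw [contractLeft_ι_mul, hg 0, map_sub, exteriorDerivative_smul, exteriorDerivative_ιMulti_D,
      exteriorDerivative_mul, ih, exteriorDerivative_ι_D, involute_ι, map_nsmul, map_nsmul,
      Fin.sum_univ_succ]
    simp only [smul_zero, zero_add, zero_mul, add_zero, neg_mul, mul_smul_comm, smul_mul_assoc]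
    rw [smul_neg, sub_neg_eq_add, add_smul]

theorem contractLeft_exteriorDerivative_add_exteriorDerivative_contractLeft {m : ℕ}
    {f : S} {e : ℕ} (hf : ε (D R S f) = e • f) {g : Fin m → S} {c : Fin m → ℕ}
    (hg : ∀ j, ε (D R S (g j)) = c j • g j) :
    contractLeft ε (exteriorDerivative R S (f • ExteriorAlgebra.ιMulti S m fun j => D R S (g j)))
      + exteriorDerivative R S
          (contractLeft ε (f • ExteriorAlgebra.ιMulti S m fun j => D R S (g j))) =
        (e + ∑ j, c j) • f • ExteriorAlgebra.ιMulti S m fun j => D R S (g j) := by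
  rw [exteriorDerivative_smul, exteriorDerivative_ιMulti_D, smul_zero, zero_add,
    contractLeft_ι_mul, map_smul, exteriorDerivative_smul,
    exteriorDerivative_contractLeft_ιMulti_D ε hg, hf, add_smul, smul_comm f, smul_assoc]
  abel

end KaehlerDifferential

theorem algebraMap_inv_natCast_smul_nsmul {K A M : Type*} [Field K] [CommRing A]
    [Algebra K A] [AddCommGroup M] [Module A M] {i : ℕ} (hi : (i : K) ≠ 0) (x : M) :
    algebraMap K A (i : K)⁻¹ • i • x = x := by
  rw [← Nat.cast_smul_eq_nsmul A, smul_smul, ← map_natCast (algebraMap K A), ← map_mul,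
    inv_mul_cancel₀ hi, map_one, one_smul]

section FatRing

open KaehlerDifferential ExteriorAlgebra

variable {K n k}

local notation "Λ" => ExteriorAlgebra (FatRing K n k) Ω[FatRing K n k⁄K]
local notation "δ" => exteriorDerivative K (FatRing K n k)

theorem one_mem_FatRingComp_zero : (1 : FatRing K n k) ∈ FatRingComp K n k 0 :=
  ⟨1, isHomogeneous_one _ _, map_one (Ideal.Quotient.mkₐ K _)⟩

theorem smul_ιMulti_mem_OmegaComp {m e : ℕ} {f : FatRing K n k} (hf : f ∈ FatRingComp K n k e)
    {c : Fin m → ℕ} {g : Fin m → FatRing K n k} (hg : ∀ j, g j ∈ FatRingComp K n k (c j)) :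
    f • exteriorPower.ιMulti (FatRing K n k) m (fun j => D K (FatRing K n k) (g j)) ∈
      OmegaComp K n k m (e + ∑ j, c j) :=
  Submodule.subset_span ⟨e, f, hf, c, g, hg, rfl, rfl⟩

theorem exists_mem_OmegaComp_succ_coe_eq_exteriorDerivative {m i : ℕ}
    {w : ⋀[FatRing K n k]^m Ω[FatRing K n k⁄K]} (hw : w ∈ OmegaComp K n k m i) :
    ∃ v ∈ OmegaComp K n k (m + 1) i, (v : Λ) = δ w := by
  induction hw using Submodule.span_induction with
  | mem x hx =>
    obtain ⟨e, f, hf, c, g, hg, rfl, hx⟩ := hx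
    have hv := smul_ιMulti_mem_OmegaComp one_mem_FatRingComp_zero
      (c := Fin.cons e c) (g := Fin.cons f g) (Fin.cases hf hg)
    rw [Fin.sum_cons, zero_add] at hv
    refine ⟨_, hv, ?_⟩
    rw [hx, exteriorDerivative_smul_ιMulti_D]
    exact one_smul _ _
  | zero => exact ⟨0, Submodule.zero_mem _, by simp⟩
  | add x y _ _ hx hy =>
    obtain ⟨u, hu, hux⟩ := hx
    obtain ⟨v, hv, hvy⟩ := hy
    exact ⟨u + v, Submodule.add_mem _ hu hv, by simp [hux, hvy]⟩
  | smul c x _ hx =>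
    obtain ⟨v, hv, hvx⟩ := hx
    refine ⟨c • v, Submodule.smul_mem _ c hv, ?_⟩
    change algebraMap K (FatRing K n k) c • (v : Λ) = δ (algebraMap K (FatRing K n k) c • (x : Λ))
    rw [exteriorDerivative_algebraMap_smul, hvx]

variable {ε : Dual (FatRing K n k) Ω[FatRing K n k⁄K]}

theorem contractLeft_exteriorDerivative_add_of_mem_OmegaComp
    (hε : ∀ (d : ℕ) (f : FatRing K n k), f ∈ FatRingComp K n k d →
      ε (D K (FatRing K n k) f) = d • f)
    {m i : ℕ} {w : ⋀[FatRing K n k]^m Ω[FatRing K n k⁄K]} (hw : w ∈ OmegaComp K n k m i) :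
    contractLeft ε (δ w) + δ (contractLeft ε w) = i • (w : Λ) := by
  induction hw using Submodule.span_induction with
  | mem x hx =>
    obtain ⟨e, f, hf, c, g, hg, rfl, hx⟩ := hx
    rw [hx]
    exact contractLeft_exteriorDerivative_add_exteriorDerivative_contractLeft ε (hε e f hf)
      fun j => hε _ _ (hg j)
  | zero => simp
  | add x y _ _ hx hy =>
    simp only [Submodule.coe_add, map_add, smul_add, ← hx, ← hy]
    abel
  | smul c x _ hx =>
    change contractLeft ε (δ (algebraMap K (FatRing K n k) c • (x : Λ))) +
        δ (contractLeft ε (algebraMap K (FatRing K n k) c • (x : Λ))) =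
      i • algebraMap K (FatRing K n k) c • (x : Λ)
    rw [exteriorDerivative_algebraMap_smul, map_smul, map_smul,
      exteriorDerivative_algebraMap_smul, ← smul_add, hx, smul_comm]

theorem exists_mem_OmegaComp_succ_contractLeft_eq
    (hε : ∀ (d : ℕ) (f : FatRing K n k), f ∈ FatRingComp K n k d →
      ε (D K (FatRing K n k) f) = d • f)
    {m i : ℕ} (hi : (i : K) ≠ 0) {w : ⋀[FatRing K n k]^m Ω[FatRing K n k⁄K]}
    (hw : w ∈ OmegaComp K n k m i) (hεw : contractLeft ε (w : Λ) = 0) :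
    ∃ v ∈ OmegaComp K n k (m + 1) i, contractLeft ε (v : Λ) = w := by
  obtain ⟨v, hv, hvw⟩ := exists_mem_OmegaComp_succ_coe_eq_exteriorDerivative hw
  have hεv := contractLeft_exteriorDerivative_add_of_mem_OmegaComp hε hw
  rw [hεw, map_zero, add_zero, ← hvw] at hεv
  refine ⟨(i : K)⁻¹ • v, Submodule.smul_mem _ _ hv, ?_⟩
  change contractLeft ε (algebraMap K (FatRing K n k) (i : K)⁻¹ • (v : Λ)) = w
  rw [map_smul, hεv, algebraMap_inv_natCast_smul_nsmul hi]

theorem exists_mem_OmegaComp_one_coe_eq_ι {i : ℕ} {w : Ω[FatRing K n k⁄K]}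
    (hw : w ∈ Omega1Comp K n k i) :
    ∃ u ∈ OmegaComp K n k 1 i, (u : Λ) = ι (FatRing K n k) w := by
  induction hw using Submodule.span_induction with
  | mem x hx =>
    obtain ⟨e, f, hf, c, g, hg, rfl, rfl⟩ := hx
    have hu := smul_ιMulti_mem_OmegaComp (m := 1) hf (c := fun _ => c) (g := fun _ => g) fun _ => hg
    rw [Fin.sum_univ_one] at hu
    exact ⟨_, hu, by simp⟩
  | zero => exact ⟨0, Submodule.zero_mem _, by simp⟩
  | add x y _ _ hx hy =>
    obtain ⟨u, hu, hux⟩ := hx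
    obtain ⟨v, hv, hvy⟩ := hy
    exact ⟨u + v, Submodule.add_mem _ hu hv, by simp [hux, hvy]⟩
  | smul c x _ hx =>
    obtain ⟨u, hu, hux⟩ := hx
    refine ⟨c • u, Submodule.smul_mem _ c hu, ?_⟩
    change algebraMap K (FatRing K n k) c • (u : Λ) = _
    rw [← algebraMap_smul (FatRing K n k) c x, map_smul, hux]

end FatRing

theorem statement_17
    (ε : Ω[FatRing K n k⁄K] →ₗ[FatRing K n k] FatRing K n k)
    (hε : ∀ (d : ℕ) (f : FatRing K n k), f ∈ FatRingComp K n k d →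
      ε (KaehlerDifferential.D K (FatRing K n k) f) = (d : ℕ) • f)
    (E1 : (⋀[FatRing K n k]^2 (Ω[FatRing K n k⁄K])) →ₗ[FatRing K n k] Ω[FatRing K n k⁄K])
    (hE1 : ∀ (w : Fin 2 → Ω[FatRing K n k⁄K])
        (h : ExteriorAlgebra.ιMulti (FatRing K n k) 2 w ∈
          ⋀[FatRing K n k]^2 (Ω[FatRing K n k⁄K])),
      E1 ⟨ExteriorAlgebra.ιMulti (FatRing K n k) 2 w, h⟩ = ε (w 0) • w 1 - ε (w 1) • w 0)
    (E : ∀ m : ℕ, (⋀[FatRing K n k]^(m+3) (Ω[FatRing K n k⁄K])) →ₗ[FatRing K n k]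
        (⋀[FatRing K n k]^(m+2) (Ω[FatRing K n k⁄K])))
    (hE : ∀ (m : ℕ) (w : Fin (m+3) → Ω[FatRing K n k⁄K])
        (h : ExteriorAlgebra.ιMulti (FatRing K n k) (m+3) w ∈
          ⋀[FatRing K n k]^(m+3) (Ω[FatRing K n k⁄K])),
      ((E m ⟨ExteriorAlgebra.ιMulti (FatRing K n k) (m+3) w, h⟩ :
          ⋀[FatRing K n k]^(m+2) (Ω[FatRing K n k⁄K])) :
          ExteriorAlgebra (FatRing K n k) (Ω[FatRing K n k⁄K]))
        = ∑ j : Fin (m+3), ((-1 : ℤ) ^ (j : ℕ)) •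
            (ε (w j) • ExteriorAlgebra.ιMulti (FatRing K n k) (m+2)
              (fun i => w (j.succAbove i))))
    (i : ℕ) (hi : 1 ≤ i) (hchar : ringChar K = 0 ∨ ¬ (ringChar K ∣ i)) :
    (∀ f ∈ FatRingComp K n k i, ∃ w ∈ Omega1Comp K n k i, ε w = f) ∧
    (∀ w ∈ Omega1Comp K n k i, ε w = 0 → ∃ v ∈ OmegaComp K n k 2 i, E1 v = w) ∧
    (∀ w ∈ OmegaComp K n k 2 i, E1 w = 0 → ∃ v ∈ OmegaComp K n k 3 i, E 0 v = w) ∧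
    (∀ m : ℕ, ∀ w ∈ OmegaComp K n k (m+3) i, E m w = 0 →
      ∃ v ∈ OmegaComp K n k (m+4) i, E (m+1) v = w) := by
  open ExteriorAlgebra in
  have hiK : (i : K) ≠ 0 := by
    rw [Ne, CharP.cast_eq_zero_iff K (ringChar K)]
    rcases hchar with h | h
    · rw [h, zero_dvd_iff]; omega
    · exact h
  have hE1_contract : ∀ x, ι (FatRing K n k) (E1 x) = contractLeft ε x :=
    apply_eq_contractLeft_of_apply_ιMulti ε E1 (ExteriorAlgebra.ι _) fun w => by
      refine (congrArg (ExteriorAlgebra.ι _) (hE1 w _)).trans ?_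
      rw [contractLeft_ιMulti]
      simp [Fin.sum_univ_two, sub_eq_add_neg]
  have hE_contract : ∀ m x, (E m x : ExteriorAlgebra _ _) = contractLeft ε x := fun m =>
    apply_eq_contractLeft_of_apply_ιMulti ε (E m) (Submodule.subtype _) fun w =>
      (hE m w _).trans (contractLeft_ιMulti ε w).symm
  refine ⟨fun f hf => ?_, fun w hw hεw => ?_, fun w hw hw0 => ?_, fun m w hw hw0 => ?_⟩
  · refine ⟨(i : K)⁻¹ • KaehlerDifferential.D K _ f, Submodule.smul_mem _ _
      (Submodule.subset_span ⟨0, 1, one_mem_FatRingComp_zero, i, f, hf, zero_add i,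
        (one_smul _ _).symm⟩), ?_⟩
    rw [LinearMap.map_smul_of_tower, hε i f hf, ← Nat.cast_smul_eq_nsmul K, inv_smul_smul₀ hiK]
  · obtain ⟨u, hu, hu_eq⟩ := exists_mem_OmegaComp_one_coe_eq_ι hw
    obtain ⟨v, hv, hvu⟩ := exists_mem_OmegaComp_succ_contractLeft_eq hε hiK hu
      (by rw [hu_eq, contractLeft_ι, hεw, map_zero])
    exact ⟨v, hv, (ι_inj _ _ _).1 (by rw [hE1_contract, hvu, hu_eq])⟩
  · obtain ⟨v, hv, hvw⟩ := exists_mem_OmegaComp_succ_contractLeft_eq hε hiK hw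
      (by rw [← hE1_contract, hw0, map_zero])
    exact ⟨v, hv, Subtype.ext (by rw [hE_contract, hvw])⟩
  · obtain ⟨v, hv, hvw⟩ := exists_mem_OmegaComp_succ_contractLeft_eq hε hiK hw
      (by rw [← hE_contract, hw0, ZeroMemClass.coe_zero])
    exact ⟨v, hv, Subtype.ext (by rw [hE_contract, hvw])⟩
end
end

section
/- Let (T, n) be a 0-dimensional local affine K-algebra over a perfect field K whose maximal ideal n is principal, say n = ⟨a⟩, with nilpotency index ν = min{i ≥ 1 : a^i = 0}, residue field L = T/n, and κ = dim_K L. Then dim_K(T) = ν·κ, and dim_K(Ω^1_{T/K}) = ν·κ if char(K) divides ν, while dim_K(Ω^1_{T/K}) = (ν−1)·κ if char(K) does not divide ν. -/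
/-!
Since `K` is perfect, the residue field `L = T/n` is separable, hence formally étale, over `K`;
as `n` is nilpotent, `L` lifts to a coefficient field `L ⊆ T`. Then `T = L + aT` forces
`L[X] → T, X ↦ a` to be surjective, with kernel `(X^ν)`, so `T ≅ L[X]/(X^ν)` and
`dim_K T = ν κ`. Every `K`-derivation of `T` kills `L` because `Ω_{L/K} = 0`, so
`d(f(a)) = f'(a) da` and `Ω_{T/K}` is cyclic on `da`. Its annihilator is `(ν a^{ν-1})`: this
ideal kills `da` since `d(a^ν) = 0`, and `f(a) ↦ f'(a)` is a well-defined derivation into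
`T/(ν a^{ν-1})` sending `a` to `1`. Hence `Ω_{T/K} ≅ T/(ν a^{ν-1})`, which is `T` when
`char K ∣ ν` and `T/(a^{ν-1})` otherwise.
-/

open Module IsLocalRing Polynomial KaehlerDifferential

section TruncatedPolynomial

variable {T : Type*} [CommRing T] {a : T}

theorem pow_eq_zero_of_mem_span_pow_succ (ha : IsNilpotent a) {k : ℕ}
    (h : a ^ k ∈ Ideal.span {a ^ (k + 1)}) : a ^ k = 0 := by
  obtain ⟨c, hc⟩ := Ideal.mem_span_singleton'.mp h
  have hfix : ∀ n, a ^ k = (c * a) ^ n * a ^ k := by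
    intro n
    induction n with
    | zero => simp
    | succ n ih =>
      rw [pow_succ, mul_assoc, show c * a * a ^ k = a ^ k by linear_combination hc, ← ih]
  obtain ⟨n, hn⟩ := ha
  rw [hfix n, mul_pow, hn, mul_zero, zero_mul]

theorem aeval_surjective_of_forall_sub_mem_span {R : Type*} [CommRing R] [Algebra R T]
    (ha : IsNilpotent a) (h : ∀ t : T, ∃ r : R, t - algebraMap R T r ∈ Ideal.span {a}) :
    Function.Surjective (aeval a : R[X] →ₐ[R] T) := by
  have approx : ∀ n : ℕ, ∀ t : T, ∃ f : R[X], t - aeval a f ∈ Ideal.span {a ^ n} := by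
    intro n
    induction n with
    | zero => exact fun t => ⟨0, by simp⟩
    | succ n ih =>
      intro t
      obtain ⟨f, hf⟩ := ih t
      obtain ⟨c, hc⟩ := Ideal.mem_span_singleton'.mp hf
      obtain ⟨r, hr⟩ := h c
      obtain ⟨d, hd⟩ := Ideal.mem_span_singleton'.mp hr
      refine ⟨f + C r * X ^ n, Ideal.mem_span_singleton'.mpr ⟨d, ?_⟩⟩
      simp only [map_add, map_mul, aeval_C, aeval_X, map_pow]
      linear_combination a ^ n * hd + hc
  obtain ⟨n, hn⟩ := ha
  intro t
  obtain ⟨f, hf⟩ := approx n t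
  rw [hn, Ideal.span_singleton_eq_bot.mpr rfl, Ideal.mem_bot, sub_eq_zero] at hf
  exact ⟨f, hf.symm⟩

variable {L : Type*} [Field L] [Algebra L T]

theorem X_pow_dvd_of_aeval_mem_span_pow (ha : IsNilpotent a) {f : L[X]} :
    ∀ {k : ℕ}, (∀ i < k, a ^ i ≠ 0) → aeval a f ∈ Ideal.span {a ^ k} → X ^ k ∣ f
  | 0, _, _ => by simp
  | k + 1, hk, hf => by
    obtain ⟨g, rfl⟩ : X ^ k ∣ f :=
      X_pow_dvd_of_aeval_mem_span_pow ha (fun i hi => hk i (by omega))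
        (Ideal.span_singleton_le_span_singleton.mpr (pow_dvd_pow a k.le_succ) hf)
    suffices hg : g.coeff 0 = 0 by
      rw [pow_succ]
      exact mul_dvd_mul_left _ (X_dvd_iff.mpr hg)
    by_contra hg
    refine hk k k.lt_succ_self (pow_eq_zero_of_mem_span_pow_succ ha ?_)
    have hsplit : aeval a (X ^ k * g) =
        algebraMap L T (g.coeff 0) * a ^ k + a ^ (k + 1) * aeval a g.divX := by
      conv_lhs => rw [← divX_mul_X_add g]
      simp only [map_mul, map_pow, map_add, aeval_X, aeval_C]
      ring
    have hlead : algebraMap L T (g.coeff 0) * a ^ k ∈ Ideal.span {a ^ (k + 1)} := by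
      have := sub_mem hf (Ideal.mul_mem_right (aeval a g.divX) _ (Ideal.mem_span_singleton_self _))
      rwa [hsplit, add_sub_cancel_right] at this
    simpa [← mul_assoc, ← map_mul, inv_mul_cancel₀ hg] using
      Ideal.mul_mem_left _ (algebraMap L T (g.coeff 0)⁻¹) hlead

theorem aeval_mem_span_pow_iff (ha : IsNilpotent a) {k : ℕ} (hk : ∀ i < k, a ^ i ≠ 0)
    (f : L[X]) : aeval a f ∈ Ideal.span {a ^ k} ↔ X ^ k ∣ f := by
  refine ⟨X_pow_dvd_of_aeval_mem_span_pow ha hk, ?_⟩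
  rintro ⟨g, rfl⟩
  rw [map_mul, map_pow, aeval_X]
  exact Ideal.mul_mem_right _ _ (Ideal.mem_span_singleton_self _)

theorem finrank_quotient_span_pow (ha : IsNilpotent a)
    (hsurj : Function.Surjective (aeval a : L[X] →ₐ[L] T)) {k : ℕ}
    (hk : ∀ i < k, a ^ i ≠ 0) : finrank L (T ⧸ Ideal.span {a ^ k}) = k := by
  set φ := (Ideal.Quotient.mkₐ L (Ideal.span {a ^ k})).comp (aeval a : L[X] →ₐ[L] T)
  have hker : RingHom.ker φ = Ideal.span {X ^ k} := by
    ext f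
    rw [RingHom.mem_ker, Ideal.mem_span_singleton, ← aeval_mem_span_pow_iff ha hk]
    exact Ideal.Quotient.eq_zero_iff_mem
  have hφ : Function.Surjective φ := (Ideal.Quotient.mkₐ_surjective L _).comp hsurj
  have e := (Ideal.quotientEquivAlgOfEq L hker).symm.trans
    (Ideal.quotientKerAlgEquivOfSurjective hφ)
  rw [← e.toLinearEquiv.finrank_eq, finrank_quotient_span_eq_natDegree, natDegree_X_pow]

theorem X_pow_dvd_of_aeval_eq_zero {ν : ℕ} (hν : a ^ ν = 0) (hlt : ∀ i < ν, a ^ i ≠ 0)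
    {f : L[X]} (hf : aeval a f = 0) : X ^ ν ∣ f :=
  X_pow_dvd_of_aeval_mem_span_pow ⟨ν, hν⟩ hlt (hf ▸ zero_mem _)

end TruncatedPolynomial

theorem Derivation.exists_apply_eq_of_surjective {R A B M : Type*} [CommRing R] [CommRing A]
    [CommRing B] [Algebra R A] [Algebra R B] [AddCommGroup M] [Module B M] [Module R M]
    [IsScalarTower R B M] (f : A →ₐ[R] B) (hf : Function.Surjective f) (δ : A →ₗ[R] M)
    (hδ : ∀ x y, δ (x * y) = f x • δ y + f y • δ x) (hker : ∀ x, f x = 0 → δ x = 0) :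
    ∃ D : Derivation R B M, ∀ x, D (f x) = δ x := by
  let g : B →ₗ[R] M := (LinearMap.ker f.toLinearMap).liftQ δ (fun x hx =>
      LinearMap.mem_ker.mpr (hker x (LinearMap.mem_ker.mp hx))) ∘ₗ
    (f.toLinearMap.quotKerEquivOfSurjective hf).symm.toLinearMap
  have hg : ∀ x, g (f x) = δ x := fun x => by
    have : (f.toLinearMap.quotKerEquivOfSurjective hf).symm (f x) = Submodule.Quotient.mk x := by
      rw [LinearEquiv.symm_apply_eq]; rfl
    simp [g, this]
  refine ⟨Derivation.mk' g fun b c => ?_, hg⟩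
  obtain ⟨x, rfl⟩ := hf b
  obtain ⟨y, rfl⟩ := hf c
  simp only [← map_mul, hg, hδ]

section KaehlerDifferential

variable {K L T : Type*} [CommRing K] [CommRing L] [CommRing T] [Algebra K T] [Algebra L T]

theorem Derivation.map_aeval_of_map_algebraMap {M : Type*}
    [AddCommGroup M] [Module T M] [Module K M] [IsScalarTower K T M] (D : Derivation K T M)
    (hD : ∀ l : L, D (algebraMap L T l) = 0) (a : T) (f : L[X]) :
    D (aeval a f) = aeval a (derivative f) • D a := by
  induction f using Polynomial.induction_on' with
  | add p q hp hq => simp only [map_add, hp, hq, add_smul]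
  | monomial n c =>
    simp only [aeval_monomial, derivative_monomial, Derivation.leibniz, Derivation.leibniz_pow, hD,
      smul_zero, add_zero, map_mul, mul_smul, _root_.map_natCast, Nat.cast_smul_eq_nsmul]

variable [Algebra K L] [IsScalarTower K L T]

theorem KaehlerDifferential.D_algebraMap_eq_zero [Algebra.FormallyUnramified K L]
    (l : L) : D K T (algebraMap L T l) = 0 := by
  rw [← KaehlerDifferential.map_D K K L T, Subsingleton.elim (D K L l) 0, map_zero]

theorem KaehlerDifferential.span_D_eq_top_of_aeval_surjective [Algebra.FormallyUnramified K L]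
    {a : T} (hsurj : Function.Surjective (aeval a : L[X] →ₐ[L] T)) :
    Submodule.span T {D K T a} = ⊤ := by
  rw [eq_top_iff, ← span_range_derivation, Submodule.span_le]
  rintro _ ⟨t, rfl⟩
  obtain ⟨f, rfl⟩ := hsurj t
  rw [(D K T).map_aeval_of_map_algebraMap D_algebraMap_eq_zero]
  exact Submodule.smul_mem _ _ (Submodule.mem_span_singleton_self _)

variable {a : T} {ν : ℕ}

theorem exists_derivation_apply_eq_one (hν : a ^ ν = 0)
    (hsurj : Function.Surjective (aeval a : L[X] →ₐ[L] T))
    (hker : ∀ f : L[X], aeval a f = 0 → X ^ ν ∣ f) :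
    ∃ D : Derivation K T (T ⧸ Ideal.span {(ν : T) * a ^ (ν - 1)}), D a = 1 := by
  set J := Ideal.span {(ν : T) * a ^ (ν - 1)}
  let δ : L[X] →ₗ[K] T ⧸ J :=
    (((Ideal.Quotient.mkₐ L J).comp (aeval a)).toLinearMap ∘ₗ derivative).restrictScalars K
  have hδ : ∀ f, δ f = Ideal.Quotient.mk J (aeval a (derivative f)) := fun _ => rfl
  have hleibniz : ∀ f g, δ (f * g) = aeval a f • δ g + aeval a g • δ f := fun f g => by
    simp only [hδ, derivative_mul, map_add, map_mul, Algebra.smul_def,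
      Ideal.Quotient.algebraMap_eq]
    ring
  have hkill : ∀ f, aeval a f = 0 → δ f = 0 := fun f hf => by
    obtain ⟨g, rfl⟩ := hker f hf
    rw [hδ, Ideal.Quotient.eq_zero_iff_mem]
    simp only [derivative_mul, derivative_X_pow, map_add, map_mul, map_pow, aeval_X, hν,
      zero_mul, add_zero, map_natCast]
    exact Ideal.mul_mem_right _ _ (Ideal.mem_span_singleton_self _)
  obtain ⟨D, hD⟩ := Derivation.exists_apply_eq_of_surjective
    ((aeval a).restrictScalars K) hsurj δ hleibniz hkill
  exact ⟨D, by simpa [hδ] using hD X⟩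

theorem KaehlerDifferential.ker_toSpanSingleton_D (hν : a ^ ν = 0)
    (hsurj : Function.Surjective (aeval a : L[X] →ₐ[L] T))
    (hker : ∀ f : L[X], aeval a f = 0 → X ^ ν ∣ f) :
    LinearMap.ker (LinearMap.toSpanSingleton T Ω[T⁄K] (D K T a)) =
      Ideal.span {(ν : T) * a ^ (ν - 1)} := by
  obtain ⟨D', hD'⟩ := exists_derivation_apply_eq_one (K := K) hν hsurj hker
  ext t
  rw [LinearMap.mem_ker, LinearMap.toSpanSingleton_apply]
  constructor
  · intro ht
    have := congrArg D'.liftKaehlerDifferential ht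
    rwa [map_smul, Derivation.liftKaehlerDifferential_comp_D, hD', map_zero, Algebra.smul_def,
      mul_one, Ideal.Quotient.algebraMap_eq, Ideal.Quotient.eq_zero_iff_mem] at this
  · intro ht
    obtain ⟨c, rfl⟩ := Ideal.mem_span_singleton'.mp ht
    rw [mul_smul, mul_smul, Nat.cast_smul_eq_nsmul, ← Derivation.leibniz_pow, hν, map_zero,
      smul_zero]

theorem KaehlerDifferential.finrank_eq_finrank_quotient [Algebra.FormallyUnramified K L]
    (hν : a ^ ν = 0) (hsurj : Function.Surjective (aeval a : L[X] →ₐ[L] T))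
    (hker : ∀ f : L[X], aeval a f = 0 → X ^ ν ∣ f) :
    finrank K Ω[T⁄K] = finrank K (T ⧸ Ideal.span {(ν : T) * a ^ (ν - 1)}) := by
  have hsurjD : Function.Surjective (LinearMap.toSpanSingleton T Ω[T⁄K] (D K T a)) := by
    rw [← LinearMap.range_eq_top, LinearMap.range_toSpanSingleton,
      span_D_eq_top_of_aeval_surjective hsurj]
  let e := (Submodule.quotEquivOfEq _ _ (ker_toSpanSingleton_D hν hsurj hker).symm).trans
    ((LinearMap.toSpanSingleton T Ω[T⁄K] (D K T a)).quotKerEquivOfSurjective hsurjD)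
  exact (e.restrictScalars K).finrank_eq.symm

end KaehlerDifferential

section CoefficientField

variable {K L T : Type*} [Field K] [Field L] [CommRing T] [Algebra K L] [Algebra K T]
  [Algebra L T] [IsScalarTower K L T] {a : T} {ν : ℕ}

theorem finrank_quotient_span_pow_eq_mul
    (hsurj : Function.Surjective (aeval a : L[X] →ₐ[L] T)) (ha : IsNilpotent a) {k : ℕ}
    (hk : ∀ i < k, a ^ i ≠ 0) :
    finrank K (T ⧸ Ideal.span {a ^ k}) = k * finrank K L := by
  rw [← finrank_mul_finrank K L, finrank_quotient_span_pow ha hsurj hk, mul_comm]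

theorem finrank_eq_mul_finrank
    (hsurj : Function.Surjective (aeval a : L[X] →ₐ[L] T)) (hν : a ^ ν = 0)
    (hlt : ∀ i < ν, a ^ i ≠ 0) :
    finrank K T = ν * finrank K L := by
  have hbot : Ideal.span {a ^ ν} = ⊥ := by rw [hν, Ideal.span_singleton_eq_bot]
  rw [← finrank_quotient_span_pow_eq_mul hsurj ⟨ν, hν⟩ hlt,
    ((Submodule.quotEquivOfEqBot _ hbot).restrictScalars K).finrank_eq]

variable [Algebra.FormallyUnramified K L]

theorem finrank_kaehlerDifferential_of_dvd
    (hsurj : Function.Surjective (aeval a : L[X] →ₐ[L] T)) (hν : a ^ ν = 0)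
    (hlt : ∀ i < ν, a ^ i ≠ 0)
    (hdvd : ringChar K ∣ ν) : finrank K Ω[T⁄K] = ν * finrank K L := by
  have hνT : (ν : T) = 0 := by
    rw [← map_natCast (algebraMap K T), (ringChar.spec K ν).mpr hdvd, map_zero]
  have hbot : Ideal.span {(ν : T) * a ^ (ν - 1)} = ⊥ := by
    rw [hνT, zero_mul, Ideal.span_singleton_eq_bot]
  rw [KaehlerDifferential.finrank_eq_finrank_quotient hν hsurj
      fun _ => X_pow_dvd_of_aeval_eq_zero hν hlt,
    ((Submodule.quotEquivOfEqBot _ hbot).restrictScalars K).finrank_eq,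
    finrank_eq_mul_finrank hsurj hν hlt]

theorem finrank_kaehlerDifferential_of_not_dvd
    (hsurj : Function.Surjective (aeval a : L[X] →ₐ[L] T)) (hν : a ^ ν = 0)
    (hlt : ∀ i < ν, a ^ i ≠ 0)
    (hndvd : ¬ ringChar K ∣ ν) : finrank K Ω[T⁄K] = (ν - 1) * finrank K L := by
  have hνT : IsUnit (ν : T) := by
    rw [← map_natCast (algebraMap K T)]
    exact (isUnit_iff_ne_zero.mpr fun h => hndvd ((ringChar.spec K ν).mp h)).map _
  rw [KaehlerDifferential.finrank_eq_finrank_quotient hν hsurj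
      fun _ => X_pow_dvd_of_aeval_eq_zero hν hlt,
    Ideal.span_singleton_mul_left_unit hνT,
    finrank_quotient_span_pow_eq_mul hsurj ⟨ν, hν⟩ fun i hi => hlt i (by omega)]

end CoefficientField

theorem exists_algHom_section_quotient_maximalIdeal (K T : Type*) [Field K] [PerfectField K]
    [CommRing T] [IsLocalRing T] [Algebra K T] [FiniteDimensional K T] :
    ∃ σ : T ⧸ maximalIdeal T →ₐ[K] T, ∀ x, Ideal.Quotient.mk _ (σ x) = x := by
  have : IsArtinianRing T := IsArtinianRing.of_finite K T
  have hnil : IsNilpotent (maximalIdeal T) := by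
    simpa [jacobson_eq_maximalIdeal ⊥ bot_ne_top] using
      IsArtinianRing.isNilpotent_jacobson_bot (R := T)
  let := Ideal.Quotient.field (maximalIdeal T)
  exact ⟨Algebra.FormallySmooth.lift _ hnil (AlgHom.id K _),
    Algebra.FormallySmooth.mk_lift _ hnil (AlgHom.id K _)⟩

theorem statement_18_general (K T : Type) [Field K] [PerfectField K] [CommRing T] [IsLocalRing T]
    [Algebra K T] [FiniteDimensional K T]
    (a : T) (ha : maximalIdeal T = Ideal.span {a})
    (ν : ℕ) (hνzero : a ^ ν = 0) (hνmin : ∀ i, 1 ≤ i → a ^ i = 0 → ν ≤ i) :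
    finrank K T = ν * finrank K (T ⧸ maximalIdeal T) ∧
    ((ringChar K ∣ ν) →
      finrank K (Ω[T⁄K]) = ν * finrank K (T ⧸ maximalIdeal T)) ∧
    (¬ (ringChar K ∣ ν) →
      finrank K (Ω[T⁄K]) = (ν - 1) * finrank K (T ⧸ maximalIdeal T)) := by
  let := Ideal.Quotient.field (maximalIdeal T)
  obtain ⟨σ, hσ⟩ := exists_algHom_section_quotient_maximalIdeal K T
  have : Algebra.FormallyEtale K (T ⧸ maximalIdeal T) := .of_isSeparable K _
  let := σ.toAlgebra
  have := IsScalarTower.of_algebraMap_eq' σ.comp_algebraMap.symm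
  have hsurj : Function.Surjective (aeval a : (T ⧸ maximalIdeal T)[X] →ₐ[_] T) :=
    aeval_surjective_of_forall_sub_mem_span ⟨ν, hνzero⟩ fun t => ⟨Ideal.Quotient.mk _ t, by
      rw [← ha, ← Ideal.Quotient.eq_zero_iff_mem, map_sub, sub_eq_zero]
      exact (hσ _).symm⟩
  have hlt : ∀ i < ν, a ^ i ≠ 0 := fun i hi h => by
    rcases i with _ | i
    · exact one_ne_zero ((pow_zero a).symm.trans h)
    · exact absurd (hνmin _ (by omega) h) (by omega)
  exact ⟨finrank_eq_mul_finrank hsurj hνzero hlt,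
    finrank_kaehlerDifferential_of_dvd hsurj hνzero hlt,
    finrank_kaehlerDifferential_of_not_dvd hsurj hνzero hlt⟩

/-- Let `(T, n)` be a 0-dimensional local affine algebra over a perfect field `K` whose
maximal ideal is principal, `n = ⟨a⟩`, with nilpotency index `ν = min {i ≥ 1 : a^i = 0}`,
residue field `L = T/n` and `κ = dim_K L`.  Then `dim_K T = ν κ`, and
`dim_K Ω¹_{T/K} = ν κ` if `char K ∣ ν`, while `dim_K Ω¹_{T/K} = (ν-1) κ` otherwise. -/
theorem statement_18 (K T : Type) [Field K] [PerfectField K] [CommRing T] [IsLocalRing T]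
    [Algebra K T] [FiniteDimensional K T]
    (a : T) (ha : maximalIdeal T = Ideal.span {a})
    (ν : ℕ) (hν1 : 1 ≤ ν) (hνzero : a ^ ν = 0) (hνmin : ∀ i, 1 ≤ i → a ^ i = 0 → ν ≤ i) :
    finrank K T = ν * finrank K (T ⧸ maximalIdeal T) ∧
    ((ringChar K ∣ ν) →
      finrank K (Ω[T⁄K]) = ν * finrank K (T ⧸ maximalIdeal T)) ∧
    (¬ (ringChar K ∣ ν) →
      finrank K (Ω[T⁄K]) = (ν - 1) * finrank K (T ⧸ maximalIdeal T)) :=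
  statement_18_general K T a ha ν hνzero hνmin
end
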